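/- Let S and r be parameters with 0 < S < 4r. There exists a twice continuously differentiable function u₀ : ℝ → ℝ such that: (i) u₀''(x) + S·f(u₀(x)) + (2S/r)(2u₀(x)−1)(u₀'(x))² = 0 for all x ∈ ℝ; (ii) lim_{x→−∞} u₀(x) = 1 and lim_{x→+∞} u₀(x) = 0; (iii) 0 < u₀(x) < 1 for all x and u₀ is strictly decreasing; (iv) u₀(0) = 1/2; (v) u₀(−x) = 1 − u₀(x) for all x ∈ ℝ. -/

import Mathlib

open Real Filter Topology

noncomputable def fpoly (u : ℝ) : ℝ := u * (2 * u - 1) * (1 - u)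

/-!
Regard `p = (u₀')²` as a function of `u = u₀`. Since `dp/du = 2 u₀''`, the equation becomes
the linear first-order equation `p'(u) = -2 (S f(u) + (2S/r)(2u - 1) p(u))`, whose solution
vanishing at `u = 0` is `G(u) = r²/(8S) (e^y - 1 - y)` with `y = (4S/r) u (1 - u)` (this is
`slopeSq`). `G` is symmetric under `u ↦ 1 - u`, positive on `(0, 1)` and `O(u²)` at `0`.
The wave is the inverse of `x(u) = ∫_u^{1/2} G^{-1/2}` (`position`), which is strictly
decreasing on `(0, 1)`, odd about `u = 1/2`, and tends to `+∞` as `u → 0` because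
`G^{-1/2} ≥ c/u`; so it maps `(0, 1)` onto `ℝ`, and its inverse solves `u₀' = -√(G(u₀))`.
Differentiating once more gives the equation.
-/

open Set Function

section Inverse

variable {f : ℝ → ℝ} {s : Set ℝ}

theorem StrictAntiOn.strictAnti_invFunOn (hf : StrictAntiOn f s) (hsurj : SurjOn f s univ) :
    StrictAnti (invFunOn f s) := fun x y hxy => by
  have hinv := hsurj.rightInvOn_invFunOn
  rwa [← hf.lt_iff_gt (hsurj.mapsTo_invFunOn (mem_univ x)) (hsurj.mapsTo_invFunOn (mem_univ y)),
    hinv (mem_univ x), hinv (mem_univ y)]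

theorem Set.InjOn.range_invFunOn (hinj : InjOn f s) (hsurj : SurjOn f s univ) :
    range (invFunOn f s) = s := by
  refine (range_subset_iff.2 fun x => hsurj.mapsTo_invFunOn (mem_univ x)).antisymm
    fun u hu => ⟨f u, hinj.leftInvOn_invFunOn hu⟩

theorem Antitone.continuous_of_isOpen_range (hf : Antitone f) (ho : IsOpen (range f)) :
    Continuous f :=
  continuous_iff_continuousAt.2 fun x =>
    continuousAt_of_monotoneOn_of_image_mem_nhds (f := OrderDual.toDual ∘ f)
      (hf.dual_right.monotoneOn univ) univ_mem
      (by rw [image_univ]; exact ho.mem_nhds (mem_range_self x))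

theorem Antitone.tendsto_atTop_of_range_eq_Ioo {a b : ℝ} (hf : Antitone f)
    (hrange : range f = Ioo a b) (hab : a < b) : Tendsto f atTop (𝓝 a) := by
  have h := tendsto_atTop_ciInf hf (by rw [hrange]; exact bddBelow_Ioo)
  rwa [iInf, hrange, csInf_Ioo hab] at h

theorem Antitone.tendsto_atBot_of_range_eq_Ioo {a b : ℝ} (hf : Antitone f)
    (hrange : range f = Ioo a b) (hab : a < b) : Tendsto f atBot (𝓝 b) := by
  have h := tendsto_atBot_ciSup hf (by rw [hrange]; exact bddAbove_Ioo)
  rwa [iSup, hrange, csSup_Ioo hab] at h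

end Inverse

theorem hasDerivAt_deriv_of_hasDerivAt_neg_sqrt {u G A : ℝ → ℝ} {x : ℝ}
    (hu : ∀ y, HasDerivAt u (-√(G (u y))) y) (hG : HasDerivAt G (2 * A (u x)) (u x))
    (hpos : 0 < G (u x)) : HasDerivAt (deriv u) (A (u x)) x := by
  have hderiv : deriv u = fun y => -√(G (u y)) := funext fun y => (hu y).deriv
  rw [hderiv]
  refine (((hG.sqrt hpos.ne').comp x (hu x)).neg).congr_deriv ?_
  field_simp [(sqrt_pos.2 hpos).ne']

theorem exp_sub_one_sub_le_sq_mul_exp {y : ℝ} (hy : 0 ≤ y) :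
    exp y - 1 - y ≤ y ^ 2 * exp y := by
  have hsub : exp y - 1 ≤ y * exp y := by
    have h := mul_le_mul_of_nonneg_right (add_one_le_exp (-y)) (exp_pos y).le
    rw [← exp_add, neg_add_cancel, exp_zero] at h
    linarith
  calc exp y - 1 - y ≤ y * (exp y - 1) := by linarith
    _ ≤ y * (y * exp y) := mul_le_mul_of_nonneg_left hsub hy
    _ = y ^ 2 * exp y := by ring

namespace StandingWave

variable {S r : ℝ}

noncomputable def slopeSq (S r u : ℝ) : ℝ :=
  r ^ 2 / (8 * S) * (exp (4 * S / r * (u * (1 - u))) - 1 - 4 * S / r * (u * (1 - u)))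

noncomputable def position (S r u : ℝ) : ℝ := ∫ s in u..1 / 2, (√(slopeSq S r s))⁻¹

noncomputable def profile (S r : ℝ) : ℝ → ℝ := invFunOn (position S r) (Ioo 0 1)

theorem slopeSq_one_sub (u : ℝ) : slopeSq S r (1 - u) = slopeSq S r u := by
  rw [slopeSq, slopeSq, sub_sub_cancel, mul_comm (1 - u)]

@[fun_prop]
theorem continuous_slopeSq : Continuous (slopeSq S r) := by
  unfold slopeSq; fun_prop

theorem hasDerivAt_slopeSq (hS : S ≠ 0) (hr : r ≠ 0) (u : ℝ) :
    HasDerivAt (slopeSq S r)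
      (2 * -(S * fpoly u + 2 * S / r * (2 * u - 1) * slopeSq S r u)) u := by
  have hy : HasDerivAt (fun u => 4 * S / r * (u * (1 - u))) (4 * S / r * (1 - 2 * u)) u := by
    have := ((hasDerivAt_id u).mul ((hasDerivAt_id u).const_sub 1)).const_mul (4 * S / r)
    exact this.congr_deriv (by simp only [id]; ring)
  refine ((hy.exp.sub_const 1).sub hy).const_mul (r ^ 2 / (8 * S)) |>.congr_deriv ?_
  unfold slopeSq fpoly
  field_simp
  ring

theorem slopeSq_pos (hS : 0 < S) (hr : 0 < r) {u : ℝ} (hu : u ∈ Ioo 0 1) :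
    0 < slopeSq S r u := by
  have hy : 4 * S / r * (u * (1 - u)) ≠ 0 := (mul_pos (by positivity)
    (mul_pos hu.1 (sub_pos.2 hu.2))).ne'
  exact mul_pos (by positivity) (by linarith [add_one_lt_exp hy])

theorem slopeSq_le (hS : 0 < S) (hr : 0 < r) {u : ℝ} (hu : u ∈ Icc 0 1) :
    slopeSq S r u ≤ 2 * S * exp (S / r) * u ^ 2 := by
  set y := 4 * S / r * (u * (1 - u))
  have hy0 : 0 ≤ y := mul_nonneg (by positivity) (mul_nonneg hu.1 (sub_nonneg.2 hu.2))
  have hyu : y ≤ 4 * S / r * u := mul_le_mul_of_nonneg_left (by nlinarith [hu.1]) (by positivity)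
  have hyS : y ≤ S / r := by
    have : u * (1 - u) ≤ 1 / 4 := by nlinarith [sq_nonneg (u - 1 / 2)]
    calc y ≤ 4 * S / r * (1 / 4) := mul_le_mul_of_nonneg_left this (by positivity)
      _ = S / r := by ring
  calc slopeSq S r u ≤ r ^ 2 / (8 * S) * (y ^ 2 * exp (S / r)) := by
        refine mul_le_mul_of_nonneg_left ?_ (by positivity)
        exact (exp_sub_one_sub_le_sq_mul_exp hy0).trans
          (mul_le_mul_of_nonneg_left (exp_le_exp.2 hyS) (sq_nonneg y))
    _ ≤ r ^ 2 / (8 * S) * ((4 * S / r * u) ^ 2 * exp (S / r)) := by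
        gcongr
    _ = 2 * S * exp (S / r) * u ^ 2 := by
        field_simp
        ring

theorem continuousOn_inv_sqrt_slopeSq (hS : 0 < S) (hr : 0 < r) :
    ContinuousOn (fun s => (√(slopeSq S r s))⁻¹) (Ioo 0 1) :=
  (continuous_slopeSq.sqrt.continuousOn).inv₀ fun _ hu => (sqrt_pos.2 (slopeSq_pos hS hr hu)).ne'

theorem intervalIntegrable_inv_sqrt_slopeSq (hS : 0 < S) (hr : 0 < r) {a b : ℝ}
    (ha : a ∈ Ioo 0 1) (hb : b ∈ Ioo 0 1) :
    IntervalIntegrable (fun s => (√(slopeSq S r s))⁻¹) MeasureTheory.volume a b :=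
  ((continuousOn_inv_sqrt_slopeSq hS hr).mono
    (ordConnected_Ioo.uIcc_subset ha hb)).intervalIntegrable

theorem hasDerivAt_position (hS : 0 < S) (hr : 0 < r) {u : ℝ} (hu : u ∈ Ioo 0 1) :
    HasDerivAt (position S r) (-(√(slopeSq S r u))⁻¹) u := by
  have hcont := continuousOn_inv_sqrt_slopeSq hS hr
  have h := intervalIntegral.integral_hasDerivAt_right
    (intervalIntegrable_inv_sqrt_slopeSq hS hr (show (1 / 2 : ℝ) ∈ Ioo 0 1 by norm_num) hu)
    (hcont.stronglyMeasurableAtFilter isOpen_Ioo _ hu)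
    (hcont.continuousAt (isOpen_Ioo.mem_nhds hu))
  have hneg : position S r = fun u => -∫ s in 1 / 2..u, (√(slopeSq S r s))⁻¹ :=
    funext fun v => intervalIntegral.integral_symm _ _
  rw [hneg]
  exact h.neg

theorem strictAntiOn_position (hS : 0 < S) (hr : 0 < r) : StrictAntiOn (position S r) (Ioo 0 1) :=
  strictAntiOn_of_hasDerivWithinAt_neg (convex_Ioo 0 1)
    (fun u hu => (hasDerivAt_position hS hr hu).continuousAt.continuousWithinAt)
    (fun u hu => by
      rw [interior_Ioo] at hu
      exact (hasDerivAt_position hS hr hu).hasDerivWithinAt)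
    (fun u hu => by
      rw [interior_Ioo] at hu
      exact neg_neg_of_pos (inv_pos.2 (sqrt_pos.2 (slopeSq_pos hS hr hu))))

theorem position_one_sub (u : ℝ) : position S r (1 - u) = -position S r u := by
  have h := intervalIntegral.integral_comp_sub_left
    (fun s => (√(slopeSq S r s))⁻¹) 1 (a := u) (b := 1 / 2)
  simp only [slopeSq_one_sub] at h
  rw [position, intervalIntegral.integral_symm, position, h]
  norm_num

theorem position_ge_log (hS : 0 < S) (hr : 0 < r) {u : ℝ} (hu0 : 0 < u) (hu : u ≤ 1 / 2) :
    (√(2 * S * exp (S / r)))⁻¹ * (log (1 / 2) - log u) ≤ position S r u := by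
  set C := √(2 * S * exp (S / r))
  have hC : 0 < C := sqrt_pos.2 (by positivity)
  have hu1 : u ∈ Ioo 0 1 := ⟨hu0, by linarith⟩
  have hint : IntervalIntegrable (fun s => C⁻¹ * s⁻¹) MeasureTheory.volume u (1 / 2) :=
    (intervalIntegral.intervalIntegrable_inv (fun s hs => by
      rw [uIcc_of_le hu] at hs; exact (hu0.trans_le hs.1).ne') continuousOn_id).const_mul _
  calc C⁻¹ * (log (1 / 2) - log u) = ∫ s in u..1 / 2, C⁻¹ * s⁻¹ := by
        rw [intervalIntegral.integral_const_mul, integral_inv_of_pos hu0 (by norm_num),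
          log_div (by norm_num) hu0.ne']
    _ ≤ position S r u := by
        refine intervalIntegral.integral_mono_on hu hint
          (intervalIntegrable_inv_sqrt_slopeSq hS hr hu1 (by norm_num)) fun s hs => ?_
        have hs0 : 0 < s := hu0.trans_le hs.1
        have hs1 : s ≤ 1 := by linarith [hs.2]
        rw [← mul_inv]
        refine inv_anti₀ (sqrt_pos.2 (slopeSq_pos hS hr ⟨hs0, by linarith [hs.2]⟩)) ?_
        calc √(slopeSq S r s) ≤ √(2 * S * exp (S / r) * s ^ 2) :=
              sqrt_le_sqrt (slopeSq_le hS hr ⟨hs0.le, hs1⟩)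
          _ = C * s := by rw [sqrt_mul (by positivity), sqrt_sq hs0.le]

theorem tendsto_position_nhdsGT_zero (hS : 0 < S) (hr : 0 < r) :
    Tendsto (position S r) (𝓝[>] 0) atTop := by
  have hC : 0 < (√(2 * S * exp (S / r)))⁻¹ := inv_pos.2 (sqrt_pos.2 (by positivity))
  refine tendsto_atTop_mono' _ ?_ ((tendsto_atTop_add_const_left _ (log (1 / 2))
    (tendsto_neg_atBot_atTop.comp tendsto_log_nhdsGT_zero)).const_mul_atTop hC)
  filter_upwards [Ioo_mem_nhdsGT (show (0 : ℝ) < 1 / 2 by norm_num)] with u hu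
  exact position_ge_log hS hr hu.1 hu.2.le

theorem surjOn_position (hS : 0 < S) (hr : 0 < r) : SurjOn (position S r) (Ioo 0 1) univ := by
  intro x _
  have hnear0 := (tendsto_position_nhdsGT_zero hS hr).eventually_gt_atTop
  obtain ⟨a, hxa, ha⟩ := ((hnear0 x).and (Ioo_mem_nhdsGT zero_lt_one)).exists
  obtain ⟨b, hxb, hb⟩ := ((hnear0 (-x)).and (Ioo_mem_nhdsGT zero_lt_one)).exists
  have hb' : 1 - b ∈ Ioo 0 1 := ⟨by linarith [hb.2], by linarith [hb.1]⟩
  have hcont : ContinuousOn (position S r) (uIcc a (1 - b)) := fun u hu =>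
    (hasDerivAt_position hS hr
      (ordConnected_Ioo.uIcc_subset ha hb' hu)).continuousAt.continuousWithinAt
  obtain ⟨c, hc, hxc⟩ := intermediate_value_uIcc hcont
    (show x ∈ uIcc _ _ from Icc_subset_uIcc' ⟨by rw [position_one_sub]; linarith, hxa.le⟩)
  exact ⟨c, ordConnected_Ioo.uIcc_subset ha hb' hc, hxc⟩

theorem profile_mem (hS : 0 < S) (hr : 0 < r) (x : ℝ) : profile S r x ∈ Ioo 0 1 :=
  (surjOn_position hS hr).mapsTo_invFunOn (mem_univ x)

theorem position_profile (hS : 0 < S) (hr : 0 < r) (x : ℝ) :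
    position S r (profile S r x) = x :=
  (surjOn_position hS hr).rightInvOn_invFunOn (mem_univ x)

theorem profile_position (hS : 0 < S) (hr : 0 < r) {u : ℝ} (hu : u ∈ Ioo 0 1) :
    profile S r (position S r u) = u :=
  (strictAntiOn_position hS hr).injOn.leftInvOn_invFunOn hu

theorem strictAnti_profile (hS : 0 < S) (hr : 0 < r) : StrictAnti (profile S r) :=
  (strictAntiOn_position hS hr).strictAnti_invFunOn (surjOn_position hS hr)

theorem range_profile (hS : 0 < S) (hr : 0 < r) : range (profile S r) = Ioo 0 1 :=
  (strictAntiOn_position hS hr).injOn.range_invFunOn (surjOn_position hS hr)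

theorem continuous_profile (hS : 0 < S) (hr : 0 < r) : Continuous (profile S r) :=
  (strictAnti_profile hS hr).antitone.continuous_of_isOpen_range
    (by rw [range_profile hS hr]; exact isOpen_Ioo)

theorem hasDerivAt_profile (hS : 0 < S) (hr : 0 < r) (x : ℝ) :
    HasDerivAt (profile S r) (-√(slopeSq S r (profile S r x))) x := by
  have hpos := sqrt_pos.2 (slopeSq_pos hS hr (profile_mem hS hr x))
  have h := (hasDerivAt_position hS hr (profile_mem hS hr x)).of_local_left_inverse
    (continuous_profile hS hr).continuousAt (neg_ne_zero.2 (inv_ne_zero hpos.ne'))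
    (Eventually.of_forall (position_profile hS hr))
  rwa [inv_neg, inv_inv] at h

theorem hasDerivAt_deriv_profile (hS : 0 < S) (hr : 0 < r) (x : ℝ) :
    HasDerivAt (deriv (profile S r)) (-(S * fpoly (profile S r x)
      + 2 * S / r * (2 * profile S r x - 1) * slopeSq S r (profile S r x))) x :=
  hasDerivAt_deriv_of_hasDerivAt_neg_sqrt
    (A := fun u => -(S * fpoly u + 2 * S / r * (2 * u - 1) * slopeSq S r u))
    (hasDerivAt_profile hS hr) (hasDerivAt_slopeSq hS.ne' hr.ne' _)
    (slopeSq_pos hS hr (profile_mem hS hr x))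

theorem contDiff_two_profile (hS : 0 < S) (hr : 0 < r) : ContDiff ℝ 2 (profile S r) := by
  rw [show (2 : WithTop ℕ∞) = 1 + 1 from rfl, contDiff_succ_iff_deriv, contDiff_one_iff_deriv]
  refine ⟨fun x => (hasDerivAt_profile hS hr x).differentiableAt, by simp,
    fun x => (hasDerivAt_deriv_profile hS hr x).differentiableAt, ?_⟩
  rw [funext fun x => (hasDerivAt_deriv_profile hS hr x).deriv]
  have := continuous_profile hS hr
  unfold fpoly
  fun_prop

theorem profile_ode (hS : 0 < S) (hr : 0 < r) (x : ℝ) :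
    deriv (deriv (profile S r)) x + S * fpoly (profile S r x)
      + 2 * S / r * (2 * profile S r x - 1) * deriv (profile S r) x ^ 2 = 0 := by
  rw [(hasDerivAt_deriv_profile hS hr x).deriv, (hasDerivAt_profile hS hr x).deriv, neg_sq,
    sq_sqrt (slopeSq_pos hS hr (profile_mem hS hr x)).le]
  ring

theorem profile_zero (hS : 0 < S) (hr : 0 < r) : profile S r 0 = 1 / 2 := by
  have h := profile_position hS hr (show (1 / 2 : ℝ) ∈ Ioo 0 1 by norm_num)
  rwa [position, intervalIntegral.integral_same] at h

theorem profile_neg (hS : 0 < S) (hr : 0 < r) (x : ℝ) : profile S r (-x) = 1 - profile S r x := by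
  have hx := profile_mem hS hr x
  calc profile S r (-x) = profile S r (position S r (1 - profile S r x)) := by
        rw [position_one_sub, position_profile hS hr]
    _ = 1 - profile S r x := profile_position hS hr ⟨by linarith [hx.2], by linarith [hx.1]⟩

end StandingWave

open StandingWave

theorem standing_wave_existence (S r : ℝ) (hS : 0 < S) (hSr : S < 4 * r) :
    ∃ u₀ : ℝ → ℝ, ContDiff ℝ 2 u₀ ∧
      (∀ x : ℝ, deriv (deriv u₀) x + S * fpoly (u₀ x)
        + (2 * S / r) * (2 * u₀ x - 1) * (deriv u₀ x) ^ 2 = 0) ∧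
      Tendsto u₀ atBot (𝓝 1) ∧ Tendsto u₀ atTop (𝓝 0) ∧
      (∀ x : ℝ, 0 < u₀ x ∧ u₀ x < 1) ∧ StrictAnti u₀ ∧
      u₀ 0 = 1 / 2 ∧ (∀ x : ℝ, u₀ (-x) = 1 - u₀ x) := by
  have hr : 0 < r := by linarith
  have hanti := strictAnti_profile hS hr
  exact ⟨profile S r, contDiff_two_profile hS hr, profile_ode hS hr,
    hanti.antitone.tendsto_atBot_of_range_eq_Ioo (range_profile hS hr) one_pos,
    hanti.antitone.tendsto_atTop_of_range_eq_Ioo (range_profile hS hr) one_pos,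
    profile_mem hS hr, hanti, profile_zero hS hr, profile_neg hS hr⟩
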